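/- Let s ∈ (0,1), ρ ∈ (0,∞], and M : ℝⁿ × B_ρ → ℝ^{n×n} be Lipschitz continuous with Lipschitz constant C_M, satisfying β|ξ| ≤ |M(x−y, y)ξ| ≤ α|ξ| for all x ∈ ℝⁿ, y ∈ B_ρ, ξ ∈ ℝⁿ. Define K(x,z) = c_{n,s} χ_{[0,ρ)}(|x−z|)/|M(z, x−z)(x−z)|^{n+2s} with c_{n,s} ≤ C₀ s(1−s). Then for every x ∈ ℝⁿ, ∫_{B_1} |y| · |K(x, x+y) − K(x, x−y)| dy ≤ C⋆ C_M s, where C⋆ depends only on n, α, β and C₀. -/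

import Mathlib

/-!
For `0 < ‖y‖ < ρ` both `‖M (x + y) (-y) y‖` and `‖M (x - y) y y‖` are at least `β ‖y‖`, and the two
operators differ by at most `2 C_M ‖y‖` in norm, so the mean value theorem for `t ↦ t ^ (-p)`,
`p = n + 2s`, bounds the integrand by `2 c C_M p β ^ (-p - 1) ‖y‖ ^ (2 - p)`. In polar coordinates
`∫_{B_1} ‖y‖ ^ (2 - p) = n |B_1| / (2 - 2s)`, and this factor `1 / (1 - s)` is absorbed by
`c ≤ C₀ s (1 - s)`.
-/

open MeasureTheory Metric Set
open scoped ENNReal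

section PolarIntegral

variable {E : Type*} [NormedAddCommGroup E] [NormedSpace ℝ E] [FiniteDimensional ℝ E]
  [MeasurableSpace E] [BorelSpace E] [Nontrivial E] (μ : Measure E) [μ.IsAddHaarMeasure]

lemma integrableOn_ball_norm_rpow {t : ℝ} (ht : -(Module.finrank ℝ E : ℝ) < t) :
    IntegrableOn (fun x : E => ‖x‖ ^ t) (ball 0 1) μ := by
  refine integrableOn_ball_of_norm_le_rpow (C := 1) (α := -t) Module.finrank_pos
    (by linarith) (ae_of_all _ fun x => ?_) (measurable_norm.pow_const t).aestronglyMeasurable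
  rw [neg_neg, one_mul, Real.norm_of_nonneg (by positivity)]

lemma setIntegral_ball_norm_rpow {t : ℝ} (ht : -(Module.finrank ℝ E : ℝ) < t) :
    ∫ x in ball (0 : E) 1, ‖x‖ ^ t ∂μ =
      Module.finrank ℝ E / (Module.finrank ℝ E + t) * μ.real (ball 0 1) := by
  set d := Module.finrank ℝ E
  have hd : ((d - 1 : ℕ) : ℝ) = d - 1 := by
    rw [Nat.cast_sub Module.finrank_pos, Nat.cast_one]
  have hradial : ∫ y in Ioi (0 : ℝ), y ^ (d - 1) • (Iio 1).indicator (· ^ t) y = 1 / (d + t) := by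
    calc ∫ y in Ioi (0 : ℝ), y ^ (d - 1) • (Iio 1).indicator (· ^ t) y
        = ∫ y in Ioo (0 : ℝ) 1, y ^ ((d : ℝ) - 1 + t) := by
          simp_rw [smul_eq_mul, ← indicator_mul_right _ (fun y : ℝ => y ^ (d - 1))]
          rw [setIntegral_indicator measurableSet_Iio, Ioi_inter_Iio]
          refine setIntegral_congr_fun measurableSet_Ioo fun y hy => ?_
          rw [Real.rpow_add hy.1, ← hd, Real.rpow_natCast]
      _ = 1 / (d + t) := by
          rw [← integral_Ioc_eq_integral_Ioo, ← intervalIntegral.integral_of_le zero_le_one,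
            integral_rpow (Or.inl (by linarith)), Real.zero_rpow (by linarith), Real.one_rpow]
          ring_nf
  calc ∫ x in ball (0 : E) 1, ‖x‖ ^ t ∂μ
      = ∫ x, (Iio 1).indicator (· ^ t) ‖x‖ ∂μ := by
        rw [← integral_indicator measurableSet_ball]
        congr 1 with x
        simp [indicator]
    _ = _ := by
        rw [integral_fun_norm_addHaar, hradial, nsmul_eq_mul, smul_eq_mul]
        ring

end PolarIntegral

lemma abs_rpow_neg_sub_rpow_neg_le {p m a b : ℝ} (hp : 0 ≤ p) (hm : 0 < m) (ha : m ≤ a)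
    (hb : m ≤ b) : |a ^ (-p) - b ^ (-p)| ≤ p * m ^ (-p - 1) * |a - b| := by
  have hderiv : ∀ z ∈ Ici m, HasDerivWithinAt (· ^ (-p)) (-p * z ^ (-p - 1)) (Ici m) z :=
    fun z hz => (Real.hasDerivAt_rpow_const (Or.inl (hm.trans_le hz).ne')).hasDerivWithinAt
  have hbound : ∀ z ∈ Ici m, ‖-p * z ^ (-p - 1)‖ ≤ p * m ^ (-p - 1) := fun z hz => by
    rw [norm_mul, norm_neg, Real.norm_of_nonneg hp,
      Real.norm_of_nonneg (Real.rpow_nonneg (hm.le.trans hz) _)]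
    exact mul_le_mul_of_nonneg_left (Real.rpow_le_rpow_of_nonpos hm hz (by linarith)) hp
  simpa only [← Real.norm_eq_abs] using
    (convex_Ici m).norm_image_sub_le_of_norm_hasDerivWithin_le hderiv hbound hb ha

lemma abs_norm_apply_rpow_neg_sub_le {E F : Type*} [SeminormedAddCommGroup E] [NormedSpace ℝ E]
    [SeminormedAddCommGroup F] [NormedSpace ℝ F] {L N : E →L[ℝ] F} {β p : ℝ} {y : E}
    (hβ : 0 < β) (hp : 0 ≤ p) (hy : 0 < ‖y‖) (hL : β * ‖y‖ ≤ ‖L y‖) (hN : β * ‖y‖ ≤ ‖N y‖) :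
    |‖L y‖ ^ (-p) - ‖N y‖ ^ (-p)| ≤ p * β ^ (-p - 1) * ‖L - N‖ * ‖y‖ ^ (-p) := by
  have hLN : |‖L y‖ - ‖N y‖| ≤ ‖L - N‖ * ‖y‖ := by
    simpa only [sub_apply] using
      (abs_norm_sub_norm_le (L y) (N y)).trans ((L - N).le_opNorm y)
  calc |‖L y‖ ^ (-p) - ‖N y‖ ^ (-p)|
      ≤ p * (β * ‖y‖) ^ (-p - 1) * (‖L - N‖ * ‖y‖) :=
        (abs_rpow_neg_sub_rpow_neg_le hp (by positivity) hL hN).trans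
          (mul_le_mul_of_nonneg_left hLN (by positivity))
    _ = p * β ^ (-p - 1) * ‖L - N‖ * ‖y‖ ^ (-p) := by
        rw [Real.mul_rpow hβ.le hy.le, Real.rpow_sub_one hy.ne']
        field_simp

lemma norm_sub_reflect_le_of_lipschitz {E G : Type*} [SeminormedAddCommGroup E]
    [NormedSpace ℝ E] [SeminormedAddCommGroup G] {M : E → E → G} {CM : ℝ}
    (hM : ∀ p q : E × E, ‖M p.1 p.2 - M q.1 q.2‖ ≤ CM * ‖p - q‖) (x y : E) :
    ‖M (x + y) (-y) - M (x - y) y‖ ≤ 2 * CM * ‖y‖ := by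
  have hdist : ‖((x + y, -y) - (x - y, y) : E × E)‖ = 2 * ‖y‖ := by
    rw [Prod.norm_def, Prod.fst_sub, Prod.snd_sub, show x + y - (x - y) = y + y by abel,
      show -y - y = -(y + y) by abel, norm_neg, max_self, ← two_smul ℝ, norm_smul,
      Real.norm_two]
  simpa only [hdist, mul_left_comm, mul_assoc] using hM (x + y, -y) (x - y, y)

lemma norm_mul_abs_kernel_sub_le {E F : Type*} [NormedAddCommGroup E] [NormedSpace ℝ E]
    [NormedAddCommGroup F] [NormedSpace ℝ F] {M : E → E → E →L[ℝ] F} {ρ : ℝ≥0∞}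
    {β CM c p : ℝ} (hβ : 0 < β) (hCM : 0 ≤ CM) (hc : 0 ≤ c) (hp : 0 ≤ p)
    (hM : ∀ x y : E, ENNReal.ofReal ‖y‖ < ρ → ∀ ξ, β * ‖ξ‖ ≤ ‖M (x - y) y ξ‖)
    (hlip : ∀ p q : E × E, ‖M p.1 p.2 - M q.1 q.2‖ ≤ CM * ‖p - q‖) (x y : E) :
    ‖y‖ * |c * (if ENNReal.ofReal ‖y‖ < ρ then (1:ℝ) else 0) / ‖M (x + y) (-y) (-y)‖ ^ p
        - c * (if ENNReal.ofReal ‖y‖ < ρ then (1:ℝ) else 0) / ‖M (x - y) y y‖ ^ p| ≤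
      2 * c * CM * p * β ^ (-p - 1) * ‖y‖ ^ (2 - p) := by
  rcases (norm_nonneg y).eq_or_lt with hy | hy
  · rw [← hy, zero_mul]
    positivity
  by_cases hρ : ENNReal.ofReal ‖y‖ < ρ
  swap
  · simp only [hρ, if_false, mul_zero, zero_div, sub_zero, abs_zero]
    positivity
  have hL : β * ‖y‖ ≤ ‖M (x + y) (-y) y‖ := by
    simpa only [sub_neg_eq_add] using hM x (-y) (by rwa [norm_neg]) y
  have hdiff := abs_norm_apply_rpow_neg_sub_le hβ hp hy hL (hM x y hρ y)
  calc ‖y‖ * |c * (if ENNReal.ofReal ‖y‖ < ρ then (1:ℝ) else 0) / ‖M (x + y) (-y) (-y)‖ ^ p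
        - c * (if ENNReal.ofReal ‖y‖ < ρ then (1:ℝ) else 0) / ‖M (x - y) y y‖ ^ p|
      = ‖y‖ * c * |‖M (x + y) (-y) y‖ ^ (-p) - ‖M (x - y) y y‖ ^ (-p)| := by
        rw [if_pos hρ, map_neg, norm_neg, Real.rpow_neg (norm_nonneg _),
          Real.rpow_neg (norm_nonneg _), mul_one, div_eq_mul_inv, div_eq_mul_inv, ← mul_sub,
          abs_mul, abs_of_nonneg hc, mul_assoc]
    _ ≤ ‖y‖ * c * (p * β ^ (-p - 1) * (2 * CM * ‖y‖) * ‖y‖ ^ (-p)) := by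
        gcongr
        exact hdiff.trans (by gcongr; exact norm_sub_reflect_le_of_lipschitz hlip x y)
    _ = 2 * c * CM * p * β ^ (-p - 1) * ‖y‖ ^ (2 - p) := by
        rw [Real.rpow_sub hy, Real.rpow_neg hy.le, Real.rpow_two]
        field_simp

lemma rpow_neg_le_max_one_inv_rpow {β q Q : ℝ} (hβ : 0 < β) (hq : 0 ≤ q) (hqQ : q ≤ Q) :
    β ^ (-q) ≤ max 1 β⁻¹ ^ Q := by
  rw [Real.rpow_neg hβ.le, ← Real.inv_rpow hβ.le]
  calc β⁻¹ ^ q ≤ max 1 β⁻¹ ^ q := Real.rpow_le_rpow (by positivity) (le_max_right _ _) hq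
    _ ≤ max 1 β⁻¹ ^ Q := Real.rpow_le_rpow_of_exponent_le (le_max_left _ _) hqQ

theorem stmt16_general (n : ℕ) (hn : 1 ≤ n) (α β C₀ : ℝ)
    (hβ : 0 < β) (hC₀ : 0 < C₀) :
    ∃ Cstar : ℝ, 0 < Cstar ∧
      ∀ (CM : ℝ), 0 ≤ CM →
      ∀ (s : ℝ), s ∈ Set.Ioo (0 : ℝ) 1 →
      ∀ (ρ : ℝ≥0∞), 0 < ρ →
      ∀ (M : EuclideanSpace ℝ (Fin n) → EuclideanSpace ℝ (Fin n) →
          (EuclideanSpace ℝ (Fin n) →L[ℝ] EuclideanSpace ℝ (Fin n)))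
        (c : ℝ), 0 ≤ c → c ≤ C₀ * s * (1 - s) →
        (∀ x y : EuclideanSpace ℝ (Fin n), ENNReal.ofReal ‖y‖ < ρ →
          ∀ ξ, β * ‖ξ‖ ≤ ‖M (x - y) y ξ‖ ∧ ‖M (x - y) y ξ‖ ≤ α * ‖ξ‖) →
        (∀ p q : EuclideanSpace ℝ (Fin n) × EuclideanSpace ℝ (Fin n),
          ‖M p.1 p.2 - M q.1 q.2‖ ≤ CM * ‖p - q‖) →
      ∀ x : EuclideanSpace ℝ (Fin n),
        (∫ y in Metric.ball (0 : EuclideanSpace ℝ (Fin n)) 1,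
          ‖y‖ * |c * (if ENNReal.ofReal ‖y‖ < ρ then (1:ℝ) else 0) /
                    ‖M (x + y) (-y) (-y)‖ ^ ((n : ℝ) + 2 * s)
                - c * (if ENNReal.ofReal ‖y‖ < ρ then (1:ℝ) else 0) /
                    ‖M (x - y) y y‖ ^ ((n : ℝ) + 2 * s)|)
          ≤ Cstar * CM * s := by
  have : Nontrivial (EuclideanSpace ℝ (Fin n)) :=
    Module.nontrivial_of_finrank_pos (R := ℝ) (by rw [finrank_euclideanSpace_fin]; omega)
  set V := volume.real (ball (0 : EuclideanSpace ℝ (Fin n)) 1)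
  have hV : 0 < V := ENNReal.toReal_pos (measure_ball_pos _ _ one_pos).ne' measure_ball_lt_top.ne
  refine ⟨C₀ * (n + 2) * max 1 β⁻¹ ^ ((n : ℝ) + 3) * n * V, by positivity, ?_⟩
  rintro CM hCM s ⟨hs0, hs1⟩ ρ - M c hc hcC hM hlip x
  set p := (n : ℝ) + 2 * s with hp
  have hdim : -(Module.finrank ℝ (EuclideanSpace ℝ (Fin n)) : ℝ) < 2 - p := by
    rw [finrank_euclideanSpace_fin]
    linarith
  have hradial : ∫ y in ball (0 : EuclideanSpace ℝ (Fin n)) 1, ‖y‖ ^ (2 - p) =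
      n / (2 - 2 * s) * V := by
    rw [setIntegral_ball_norm_rpow volume hdim, finrank_euclideanSpace_fin]
    congr 2
    ring
  have hβp : β ^ (-p - 1) ≤ max 1 β⁻¹ ^ ((n : ℝ) + 3) :=
    neg_add' p 1 ▸ rpow_neg_le_max_one_inv_rpow hβ (by positivity) (by linarith)
  calc _ ≤ ∫ y in ball (0 : EuclideanSpace ℝ (Fin n)) 1,
          2 * c * CM * p * β ^ (-p - 1) * ‖y‖ ^ (2 - p) :=
        integral_mono_of_nonneg (ae_of_all _ fun y => by positivity)
          ((integrableOn_ball_norm_rpow volume hdim).const_mul _)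
          (ae_of_all _ (norm_mul_abs_kernel_sub_le hβ hCM hc (by positivity)
            (fun x y hy ξ => (hM x y hy ξ).1) hlip x))
    _ = 2 * c * CM * p * β ^ (-p - 1) * (n / (2 - 2 * s) * V) := by
        rw [integral_const_mul, hradial]
    _ ≤ 2 * (C₀ * s * (1 - s)) * CM * (n + 2) * max 1 β⁻¹ ^ ((n : ℝ) + 3) *
          (n / (2 - 2 * s) * V) := by
        have h2s : 0 < 2 - 2 * s := by linarith
        gcongr
        linarith
    _ = C₀ * (n + 2) * max 1 β⁻¹ ^ ((n : ℝ) + 3) * n * V * CM * s := by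
        field_simp

/-- Almost-symmetry of kernels induced by a Lipschitz nondegenerate matrix
field: for `K(x,z) = c χ_{[0,ρ)}(|x−z|)/|M(z,x−z)(x−z)|^{n+2s}` with
`c ≤ C₀ s(1−s)`, one has `∫_{B_1} |y| |K(x,x+y) − K(x,x−y)| dy ≤ C⋆ C_M s`,
with `C⋆` depending only on `n, α, β, C₀`. -/
theorem stmt16 (n : ℕ) (hn : 1 ≤ n) (α β C₀ : ℝ)
    (hβ : 0 < β) (hαβ : β ≤ α) (hC₀ : 0 < C₀) :
    ∃ Cstar : ℝ, 0 < Cstar ∧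
      ∀ (CM : ℝ), 0 ≤ CM →
      ∀ (s : ℝ), s ∈ Set.Ioo (0 : ℝ) 1 →
      ∀ (ρ : ℝ≥0∞), 0 < ρ →
      ∀ (M : EuclideanSpace ℝ (Fin n) → EuclideanSpace ℝ (Fin n) →
          (EuclideanSpace ℝ (Fin n) →L[ℝ] EuclideanSpace ℝ (Fin n)))
        (c : ℝ), 0 ≤ c → c ≤ C₀ * s * (1 - s) →
        (∀ x y : EuclideanSpace ℝ (Fin n), ENNReal.ofReal ‖y‖ < ρ →
          ∀ ξ, β * ‖ξ‖ ≤ ‖M (x - y) y ξ‖ ∧ ‖M (x - y) y ξ‖ ≤ α * ‖ξ‖) →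
        (∀ p q : EuclideanSpace ℝ (Fin n) × EuclideanSpace ℝ (Fin n),
          ‖M p.1 p.2 - M q.1 q.2‖ ≤ CM * ‖p - q‖) →
      ∀ x : EuclideanSpace ℝ (Fin n),
        (∫ y in Metric.ball (0 : EuclideanSpace ℝ (Fin n)) 1,
          ‖y‖ * |c * (if ENNReal.ofReal ‖y‖ < ρ then (1:ℝ) else 0) /
                    ‖M (x + y) (-y) (-y)‖ ^ ((n : ℝ) + 2 * s)
                - c * (if ENNReal.ofReal ‖y‖ < ρ then (1:ℝ) else 0) /
                    ‖M (x - y) y y‖ ^ ((n : ℝ) + 2 * s)|)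
          ≤ Cstar * CM * s :=
  stmt16_general n hn α β C₀ hβ hC₀
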